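/- Let Σ be a finite alphabet with |Σ| ≥ 2. Then: (1) 𝓛_{Σ,r} is not closed under column concatenation ⦶; (2) 𝓛_{Σ,c} is not closed under row concatenation ⊖; (3) 𝓛_{Σ,rc} is closed neither under row nor under column concatenation. In particular, for the array pattern α = [x₁ x₂; x₂ x₃], the language L_{Σ,r}(α) ⦶ L_{Σ,r}(α) is not equal to L_{Σ,r}(γ) for any array pattern γ. -/

import Mathlib

/-!
Every array in `L_rc(α)`, `α = [x₁ x₂; x₂ x₃]`, has at least two rows and two columns, and one of
size exactly 2×2 is a letter image `[x y; y z]` of `α`. Suppose `L(α) ⦶ L(α) = L(γ)` for the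
column-row or the combined mode. An image of a pattern is never smaller than the pattern, and an
image of the same size is a letter image; comparing sizes therefore forces `γ` to be 2×4, and all
the arrays `[x y; y z] ⦶ [x' y'; y' z']` are letter images of `γ`. These separate the variables
of `γ`: the variables at (0,0) and (1,3) occur nowhere else, and the one at (0,1) at most also at
(1,0). Substituting `[a a]` and `[b b]` for the first two, `[b]` for the third and `[a]` for all
others yields the 2×5 array `[a a b a a; b a a b b]` in `L(γ)`. It is not in `L(α) ⦶ L(α)`: one
of the two factors would be 2×2, and neither candidate is symmetric. The statements about row
concatenation follow by transposition.
-/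

/-- A nonempty rectangular two-dimensional word (array) over `σ`. -/
structure Arr (σ : Type) : Type where
  rows : ℕ
  cols : ℕ
  rows_pos : 0 < rows
  cols_pos : 0 < cols
  entry : Fin rows → Fin cols → σ

namespace Arr

variable {σ γ : Type}

/-- Column concatenation: place `V` to the right of `U`; `none` if heights differ. -/
def colCat (U V : Arr σ) : Option (Arr σ) :=
  if h : U.rows = V.rows then
    some { rows := U.rows
           cols := U.cols + V.cols
           rows_pos := U.rows_pos
           cols_pos := by have := U.cols_pos; omega
           entry := fun i j =>
             if hj : (j : ℕ) < U.cols then U.entry i ⟨j, hj⟩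
             else V.entry (Fin.cast h i) ⟨(j : ℕ) - U.cols, by have := j.isLt; omega⟩ }
  else none

/-- Row concatenation: place `V` below `U`; `none` if widths differ. -/
def rowCat (U V : Arr σ) : Option (Arr σ) :=
  if h : U.cols = V.cols then
    some { rows := U.rows + V.rows
           cols := U.cols
           rows_pos := by have := U.rows_pos; omega
           cols_pos := U.cols_pos
           entry := fun i j =>
             if hi : (i : ℕ) < U.rows then U.entry ⟨i, hi⟩ j
             else V.entry ⟨(i : ℕ) - U.rows, by have := i.isLt; omega⟩ (Fin.cast h j) }
  else none

/-- A two-dimensional morphism: compatible with both concatenations,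
with "both sides undefined" counting as equal. -/
def IsMorphism (h : Arr σ → Arr γ) : Prop :=
  (∀ V W : Arr σ, Option.map h (colCat V W) = colCat (h V) (h W)) ∧
  (∀ V W : Arr σ, Option.map h (rowCat V W) = rowCat (h V) (h W))

/-- Concatenate a nonempty list of (possibly undefined) arrays with the
given partial concatenation operation; `none` on the empty list. -/
def catListO (op : Arr σ → Arr σ → Option (Arr σ)) : List (Option (Arr σ)) → Option (Arr σ)
  | [] => none
  | [a] => a
  | a :: b :: rest => a.bind fun x => (catListO op (b :: rest)).bind fun y => op x y

/-- `g_{⦶,⊖}`: substitute and assemble, first column-concatenating each row,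
then row-concatenating the rows. -/
def subCR {X : Type} (g : X → Arr σ) (α : Arr X) : Option (Arr σ) :=
  catListO rowCat (List.ofFn fun i : Fin α.rows =>
    catListO colCat (List.ofFn fun j : Fin α.cols => some (g (α.entry i j))))

/-- `g_{⊖,⦶}`: substitute and assemble, first row-concatenating each column,
then column-concatenating the columns. -/
def subRC {X : Type} (g : X → Arr σ) (α : Arr X) : Option (Arr σ) :=
  catListO colCat (List.ofFn fun j : Fin α.cols =>
    catListO rowCat (List.ofFn fun i : Fin α.rows => some (g (α.entry i j))))

/-- A substitution is uniform if all images have the same dimensions. -/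
def Uniform {X : Type} (g : X → Arr σ) : Prop :=
  ∃ m n : ℕ, ∀ x : X, (g x).rows = m ∧ (g x).cols = n

end Arr

open Arr

/-- The five modes of array pattern languages. -/
inductive Mode | h | p | r | c | rc
deriving DecidableEq

/-- The array pattern language of an array pattern (an array over the
variables `ℕ`) in each mode. -/
def langOf (σ : Type) : Mode → Arr ℕ → Set (Arr σ)
  | Mode.h, α => {W | ∃ g : Arr ℕ → Arr σ, IsMorphism g ∧ g α = W}
  | Mode.p, α => {W | ∃ s : ℕ → Arr σ, subCR s α = some W ∧ subRC s α = some W}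
  | Mode.r, α => {W | ∃ s : ℕ → Arr σ, subCR s α = some W}
  | Mode.c, α => {W | ∃ s : ℕ → Arr σ, subRC s α = some W}
  | Mode.rc, α =>
      {W | ∃ s : ℕ → Arr σ, subCR s α = some W} ∪ {W | ∃ s : ℕ → Arr σ, subRC s α = some W}

/-- Row concatenation of array languages. -/
def rowCatLang {σ : Type} (L₁ L₂ : Set (Arr σ)) : Set (Arr σ) :=
  {W | ∃ U ∈ L₁, ∃ V ∈ L₂, rowCat U V = some W}

/-- Column concatenation of array languages. -/
def colCatLang {σ : Type} (L₁ L₂ : Set (Arr σ)) : Set (Arr σ) :=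
  {W | ∃ U ∈ L₁, ∃ V ∈ L₂, colCat U V = some W}

/-- The 2×2 array pattern `[x₁ x₂; x₂ x₃]`. -/
def alpha16 : Arr ℕ :=
  ⟨2, 2, by norm_num, by norm_num, fun i j => (i : ℕ) + (j : ℕ)⟩

theorem card_le_sum_of_pos {n : ℕ} {g : Fin n → ℕ} (hg : ∀ k, 0 < g k) : n ≤ ∑ k, g k := by
  simpa using Finset.card_nsmul_le_sum Finset.univ g 1 fun k _ => hg k

theorem eq_one_of_sum_eq_card {n : ℕ} {g : Fin n → ℕ} (hg : ∀ k, 0 < g k)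
    (hsum : ∑ k, g k = n) (k : Fin n) : g k = 1 :=
  ((Finset.sum_eq_sum_iff_of_le (f := fun _ => 1) fun k _ => hg k).1 (by simpa using hsum.symm) k
    (Finset.mem_univ k)).symm

namespace Arr

variable {σ : Type}

-- `none` outside the array, so that equalities between entries need no bound proofs.
def get? (A : Arr σ) (i j : ℕ) : Option σ :=
  if h : i < A.rows ∧ j < A.cols then some (A.entry ⟨i, h.1⟩ ⟨j, h.2⟩) else none

theorem isSome_get? (A : Arr σ) (i j : ℕ) :
    (A.get? i j).isSome ↔ i < A.rows ∧ j < A.cols := by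
  unfold get?; split_ifs with h <;> simp [h]

theorem ext_get? {A B : Arr σ} (h : ∀ i j, A.get? i j = B.get? i j) : A = B := by
  have hr : ∀ i, i < A.rows ↔ i < B.rows := fun i => by
    simpa [isSome_get?, A.cols_pos, B.cols_pos] using
      Bool.eq_iff_iff.1 (congrArg Option.isSome (h i 0))
  have hc : ∀ j, j < A.cols ↔ j < B.cols := fun j => by
    simpa [isSome_get?, A.rows_pos, B.rows_pos] using
      Bool.eq_iff_iff.1 (congrArg Option.isSome (h 0 j))
  cases A with | mk r c _ _ e
  cases B with | mk r' c' _ _ e'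
  obtain rfl : r = r' := by have := hr r; have := hr r'; dsimp only at *; omega
  obtain rfl : c = c' := by have := hc c; have := hc c'; dsimp only at *; omega
  congr
  funext i j
  simpa [get?] using h i j

theorem colCat_dims {U V W : Arr σ} (h : colCat U V = some W) :
    U.rows = V.rows ∧ W.rows = U.rows ∧ W.cols = U.cols + V.cols := by
  unfold colCat at h
  split_ifs at h with hr
  cases h
  exact ⟨hr, rfl, rfl⟩

theorem get?_of_colCat {U V W : Arr σ} (h : colCat U V = some W) (i j : ℕ) :
    W.get? i j = if j < U.cols then U.get? i j else V.get? i (j - U.cols) := by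
  unfold colCat at h
  split_ifs at h with hr
  cases h
  unfold get?
  dsimp only
  split_ifs <;> first | rfl | omega

theorem colCat_eq_some_iff {U V W : Arr σ} : colCat U V = some W ↔
    U.rows = V.rows ∧
      ∀ i j, W.get? i j = if j < U.cols then U.get? i j else V.get? i (j - U.cols) := by
  refine ⟨fun h => ⟨(colCat_dims h).1, get?_of_colCat h⟩, fun ⟨hr, hW⟩ => ?_⟩
  obtain ⟨W', hW'⟩ : ∃ W', colCat U V = some W' := ⟨_, dif_pos hr⟩
  rw [hW', ext_get? fun i j => (get?_of_colCat hW' i j).trans (hW i j).symm]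

def transpose (A : Arr σ) : Arr σ :=
  ⟨A.cols, A.rows, A.cols_pos, A.rows_pos, fun i j => A.entry j i⟩

@[simp] theorem transpose_transpose (A : Arr σ) : A.transpose.transpose = A := rfl

@[simp] theorem transpose_rows (A : Arr σ) : A.transpose.rows = A.cols := rfl

@[simp] theorem transpose_cols (A : Arr σ) : A.transpose.cols = A.rows := rfl

theorem transpose_involutive : Function.Involutive (transpose : Arr σ → Arr σ) :=
  transpose_transpose

@[simp] theorem get?_transpose (A : Arr σ) (i j : ℕ) : A.transpose.get? i j = A.get? j i := by
  unfold get?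
  by_cases h : j < A.rows ∧ i < A.cols
  · rw [dif_pos (show i < A.transpose.rows ∧ j < A.transpose.cols from h.symm), dif_pos h]; rfl
  · rw [dif_neg (show ¬(i < A.transpose.rows ∧ j < A.transpose.cols) from mt And.symm h),
      dif_neg h]

theorem rowCat_transpose (U V : Arr σ) :
    rowCat U.transpose V.transpose = (colCat U V).map transpose := by
  unfold rowCat colCat
  by_cases h : U.rows = V.rows
  · rw [dif_pos h, dif_pos (show U.transpose.cols = V.transpose.cols from h)]; rfl
  · rw [dif_neg h, dif_neg (show ¬U.transpose.cols = V.transpose.cols from h)]; rfl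

theorem colCat_transpose (U V : Arr σ) :
    colCat U.transpose V.transpose = (rowCat U V).map transpose := by
  unfold rowCat colCat
  by_cases h : U.cols = V.cols
  · rw [dif_pos h, dif_pos (show U.transpose.rows = V.transpose.rows from h)]; rfl
  · rw [dif_neg h, dif_neg (show ¬U.transpose.rows = V.transpose.rows from h)]; rfl

theorem rowCat_eq_some_iff_colCat {U V W : Arr σ} :
    rowCat U V = some W ↔ colCat U.transpose V.transpose = some W.transpose := by
  rw [colCat_transpose]
  cases rowCat U V <;> simp [transpose_involutive.injective.eq_iff]

theorem rowCat_dims {U V W : Arr σ} (h : rowCat U V = some W) :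
    U.cols = V.cols ∧ W.cols = U.cols ∧ W.rows = U.rows + V.rows :=
  colCat_dims (rowCat_eq_some_iff_colCat.1 h)

theorem rowCat_eq_some_iff {U V W : Arr σ} : rowCat U V = some W ↔
    U.cols = V.cols ∧
      ∀ i j, W.get? i j = if i < U.rows then U.get? i j else V.get? (i - U.rows) j := by
  rw [rowCat_eq_some_iff_colCat, colCat_eq_some_iff]
  simp only [get?_transpose, transpose_rows, transpose_cols]
  exact and_congr_right fun _ => forall_comm

theorem catListO_cons (op : Arr σ → Arr σ → Option (Arr σ)) (a : Option (Arr σ))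
    {l : List (Option (Arr σ))} (hl : l ≠ []) :
    catListO op (a :: l) = a.bind fun x => (catListO op l).bind (op x) := by
  cases l with
  | nil => exact absurd rfl hl
  | cons b l => rfl

theorem catListO_map {op op' : Arr σ → Arr σ → Option (Arr σ)} {φ : Arr σ → Arr σ}
    (hφ : ∀ U V, op' (φ U) (φ V) = (op U V).map φ) :
    ∀ l : List (Option (Arr σ)), catListO op' (l.map (Option.map φ)) = (catListO op l).map φ
  | [] => rfl
  | [a] => rfl
  | a :: b :: l => by
    rw [List.map_cons, catListO_cons _ _ (by simp), catListO_cons _ _ (by simp),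
      catListO_map hφ (b :: l)]
    cases a <;> cases catListO op (b :: l) <;> simp [hφ]

theorem exists_of_catListO_ofFn_eq_some {op : Arr σ → Arr σ → Option (Arr σ)}
    {d e : Arr σ → ℕ}
    (hop : ∀ {U V W}, op U V = some W → d U = d W ∧ d V = d W ∧ e W = e U + e V) :
    ∀ {n : ℕ} (f : Fin n → Option (Arr σ)) {W : Arr σ}, catListO op (List.ofFn f) = some W →
      ∃ A : Fin n → Arr σ, (∀ k, f k = some (A k)) ∧ (∀ k, d (A k) = d W) ∧
        e W = ∑ k, e (A k)
  | 0, f, W, h => by simp [catListO] at h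
  | 1, f, W, h => ⟨fun _ => W, fun k => by simpa [Fin.fin_one_eq_zero k, catListO] using h,
      fun _ => rfl, by simp⟩
  | n + 2, f, W, h => by
    rw [List.ofFn_succ, catListO_cons _ _ (by simp)] at h
    obtain ⟨A₀, hA₀, h⟩ := Option.bind_eq_some_iff.1 h
    obtain ⟨W', hW', hW⟩ := Option.bind_eq_some_iff.1 h
    obtain ⟨A, hA, hd, he⟩ := exists_of_catListO_ofFn_eq_some hop _ hW'
    obtain ⟨hd₀, hd', he'⟩ := hop hW
    refine ⟨Fin.cons A₀ A, Fin.cases hA₀ hA, Fin.cases hd₀ fun k => (hd k).trans hd', ?_⟩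
    rw [Fin.sum_univ_succ, he', he]
    rfl

theorem catListO_rowCat_ofFn {m n : ℕ} (hm : 0 < m) (hn : 0 < n) (R : Fin m → Fin n → σ) :
    catListO rowCat (List.ofFn fun i => some ⟨1, n, one_pos, hn, fun _ j => R i j⟩) =
      some ⟨m, n, hm, hn, R⟩ := by
  induction m with
  | zero => omega
  | succ m ih =>
    rcases Nat.eq_zero_or_pos m with rfl | hm'
    · simp only [List.ofFn_succ, List.ofFn_zero, catListO, Option.some.injEq]
      congr
      funext i j
      rw [Fin.fin_one_eq_zero i]
    · rw [List.ofFn_succ, catListO_cons _ _ (by simp [List.ofFn_eq_nil_iff]; omega),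
        ih hm' fun i => R i.succ, Option.bind_some, Option.bind_some, rowCat_eq_some_iff]
      refine ⟨rfl, fun i j => ?_⟩
      rcases i with _ | i <;> simp [get?]

theorem catListO_colCat_ofFn {m n : ℕ} (hm : 0 < m) (hn : 0 < n) (R : Fin m → Fin n → σ) :
    catListO colCat (List.ofFn fun j => some ⟨m, 1, hm, one_pos, fun i _ => R i j⟩) =
      some ⟨m, n, hm, hn, R⟩ := by
  have h := catListO_map (op := rowCat) (fun U V => colCat_transpose U V)
    (List.ofFn fun j => some ⟨1, m, one_pos, hm, fun _ i => R i j⟩)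
  rwa [List.map_ofFn, catListO_rowCat_ofFn hn hm] at h

def map {α β : Type} (f : α → β) (A : Arr α) : Arr β :=
  ⟨A.rows, A.cols, A.rows_pos, A.cols_pos, fun i j => f (A.entry i j)⟩

def single (a : σ) : Arr σ :=
  ⟨1, 1, one_pos, one_pos, fun _ _ => a⟩

theorem subCR_single (γ : Arr ℕ) (f : ℕ → σ) :
    subCR (fun x => single (f x)) γ = some (γ.map f) := by
  unfold subCR
  simp only [single, catListO_colCat_ofFn (m := 1) one_pos γ.cols_pos fun _ j => f (γ.entry _ j)]
  exact catListO_rowCat_ofFn γ.rows_pos γ.cols_pos _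

def corner (A : Arr σ) : σ :=
  A.entry ⟨0, A.rows_pos⟩ ⟨0, A.cols_pos⟩

theorem eq_single_corner {A : Arr σ} (hr : A.rows = 1) (hc : A.cols = 1) :
    A = single A.corner := by
  cases A with | mk r c _ _ e
  dsimp only at hr hc
  subst hr hc
  congr
  funext i j
  rw [Fin.fin_one_eq_zero i, Fin.fin_one_eq_zero j]
  rfl

theorem subCR_congr {s t : ℕ → Arr σ} {γ : Arr ℕ}
    (h : ∀ i j, s (γ.entry i j) = t (γ.entry i j)) :
    subCR s γ = subCR t γ := by
  simp only [subCR, h]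

theorem exists_shape_of_subCR {s : ℕ → Arr σ} {γ : Arr ℕ} {W : Arr σ}
    (h : subCR s γ = some W) :
    ∃ R : Fin γ.rows → Arr σ, (∀ i, (R i).cols = W.cols) ∧ W.rows = ∑ i, (R i).rows ∧
      ∀ i, (∀ j, (s (γ.entry i j)).rows = (R i).rows) ∧
        (R i).cols = ∑ j, (s (γ.entry i j)).cols := by
  obtain ⟨R, hR, hcols, hrows⟩ := exists_of_catListO_ofFn_eq_some (d := cols) (e := rows)
    (fun h => by have := rowCat_dims h; omega) _ h
  refine ⟨R, hcols, hrows, fun i => ?_⟩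
  obtain ⟨A, hA, hArows, hAcols⟩ := exists_of_catListO_ofFn_eq_some (d := rows) (e := cols)
    (fun h => by have := colCat_dims h; omega) _ (hR i)
  simp only [Option.some_inj] at hA
  simp only [hA]
  exact ⟨hArows, hAcols⟩

theorem subCR_dims {s : ℕ → Arr σ} {γ : Arr ℕ} {W : Arr σ} (h : subCR s γ = some W) :
    γ.rows ≤ W.rows ∧ γ.cols ≤ W.cols := by
  obtain ⟨R, hRcols, hrows, hcells⟩ := exists_shape_of_subCR h
  have i₀ : Fin γ.rows := ⟨0, γ.rows_pos⟩
  refine ⟨hrows ▸ card_le_sum_of_pos fun i => (R i).rows_pos, ?_⟩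
  rw [← hRcols i₀, (hcells i₀).2]
  exact card_le_sum_of_pos fun j => (s _).cols_pos

theorem exists_eq_map_of_subCR {s : ℕ → Arr σ} {γ : Arr ℕ} {W : Arr σ}
    (h : subCR s γ = some W) (hr : W.rows = γ.rows) (hc : W.cols = γ.cols) :
    ∃ f : ℕ → σ, W = γ.map f := by
  obtain ⟨R, hRcols, hrows, hcells⟩ := exists_shape_of_subCR h
  have hR : ∀ i, (R i).rows = 1 :=
    eq_one_of_sum_eq_card (fun i => (R i).rows_pos) (hrows ▸ hr)
  have hcell : ∀ i j, s (γ.entry i j) = single (s (γ.entry i j)).corner :=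
    fun i j => eq_single_corner ((hcells i).1 j ▸ hR i)
      (eq_one_of_sum_eq_card (fun _ => (s _).cols_pos) ((hcells i).2 ▸ hRcols i ▸ hc) j)
  refine ⟨fun x => (s x).corner, ?_⟩
  rw [subCR_congr (t := fun x => single (s x).corner) hcell, subCR_single] at h
  exact (Option.some_inj.1 h).symm

theorem subRC_transpose (s : ℕ → Arr σ) (γ : Arr ℕ) :
    subRC (fun x => (s x).transpose) γ.transpose = (subCR s γ).map transpose := by
  rw [subCR, ← catListO_map colCat_transpose, List.map_ofFn]
  simp only [Function.comp_def, ← catListO_map rowCat_transpose, List.map_ofFn, Option.map_some]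
  rfl

theorem subCR_transpose (s : ℕ → Arr σ) (γ : Arr ℕ) :
    subCR (fun x => (s x).transpose) γ.transpose = (subRC s γ).map transpose := by
  have h := subRC_transpose (fun x => (s x).transpose) γ.transpose
  simp only [transpose_transpose] at h
  rw [h, Option.map_map]
  simp [Function.comp_def]

end Arr

open Arr

section Languages

variable {σ : Type}

theorem exists_subRC_iff {β : Arr ℕ} {W : Arr σ} :
    (∃ s, subRC s β = some W) ↔ ∃ s, subCR s β.transpose = some W.transpose := by
  constructor
  · rintro ⟨s, hs⟩
    exact ⟨_, by rw [subCR_transpose, hs]; rfl⟩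
  · rintro ⟨s, hs⟩
    exact ⟨_, by simpa [hs] using subRC_transpose s β.transpose⟩

theorem exists_subCR_iff {β : Arr ℕ} {W : Arr σ} :
    (∃ s, subCR s β = some W) ↔ ∃ s, subRC s β.transpose = some W.transpose :=
  (exists_subRC_iff (β := β.transpose) (W := W.transpose)).symm

theorem langOf_c_eq_preimage (β : Arr ℕ) :
    langOf σ Mode.c β = transpose ⁻¹' langOf σ Mode.r β.transpose :=
  Set.ext fun _ => exists_subRC_iff

theorem langOf_rc_eq_preimage (β : Arr ℕ) :
    langOf σ Mode.rc β = transpose ⁻¹' langOf σ Mode.rc β.transpose :=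
  Set.ext fun _ => or_comm.trans (or_congr exists_subRC_iff exists_subCR_iff)

theorem rowCatLang_preimage_transpose (L L' : Set (Arr σ)) :
    rowCatLang (transpose ⁻¹' L) (transpose ⁻¹' L') = transpose ⁻¹' colCatLang L L' := by
  ext W
  simp only [rowCatLang, colCatLang, Set.mem_ofPred_eq, Set.mem_preimage,
    rowCat_eq_some_iff_colCat]
  constructor
  · rintro ⟨U, hU, V, hV, h⟩
    exact ⟨_, hU, _, hV, h⟩
  · rintro ⟨U, hU, V, hV, h⟩
    exact ⟨U.transpose, hU, V.transpose, hV, h⟩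

theorem map_mem_langOf_r (β : Arr ℕ) (f : ℕ → σ) : β.map f ∈ langOf σ Mode.r β :=
  ⟨_, subCR_single β f⟩

theorem dims_le_of_mem_langOf_rc {β : Arr ℕ} {W : Arr σ} (h : W ∈ langOf σ Mode.rc β) :
    β.rows ≤ W.rows ∧ β.cols ≤ W.cols := by
  rcases h with ⟨s, hs⟩ | h
  · exact subCR_dims hs
  · obtain ⟨s, hs⟩ := exists_subRC_iff.1 h
    exact (subCR_dims hs).symm

theorem exists_eq_map_of_mem_langOf_rc {β : Arr ℕ} {W : Arr σ} (h : W ∈ langOf σ Mode.rc β)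
    (hr : W.rows = β.rows) (hc : W.cols = β.cols) : ∃ f : ℕ → σ, W = β.map f := by
  rcases h with ⟨s, hs⟩ | h
  · exact exists_eq_map_of_subCR hs hr hc
  · obtain ⟨s, hs⟩ := exists_subRC_iff.1 h
    obtain ⟨f, hf⟩ := exists_eq_map_of_subCR hs hc hr
    exact ⟨f, congrArg transpose hf⟩

end Languages

section NonClosure

variable {σ : Type}

theorem colCat_map_alpha16 (f g : ℕ → σ) :
    colCat (alpha16.map f) (alpha16.map g) =
      some ⟨2, 4, two_pos, four_pos, ![![f 0, f 1, g 0, g 1], ![f 1, f 2, g 1, g 2]]⟩ := by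
  unfold colCat
  split_ifs with h
  · congr
    funext i j
    fin_cases i <;> fin_cases j <;> rfl
  · exact absurd rfl h

theorem subCR_two_by_four {a b : σ} {s : ℕ → Arr σ} {e : Fin 2 → Fin 4 → ℕ}
    (h00 : s (e 0 0) = ⟨1, 2, one_pos, two_pos, ![![a, a]]⟩)
    (h01 : s (e 0 1) = single b) (h02 : s (e 0 2) = single a) (h03 : s (e 0 3) = single a)
    (h10 : s (e 1 0) = single b) (h11 : s (e 1 1) = single a) (h12 : s (e 1 2) = single a)
    (h13 : s (e 1 3) = ⟨1, 2, one_pos, two_pos, ![![b, b]]⟩) :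
    subCR s ⟨2, 4, two_pos, four_pos, e⟩ =
      some ⟨2, 5, two_pos, by norm_num, ![![a, a, b, a, a], ![b, a, a, b, b]]⟩ := by
  simp only [subCR, List.ofFn_succ, List.ofFn_zero, catListO]
  simp only [Fin.isValue, Fin.succ_zero_eq_one, Fin.succ_one_eq_two, Fin.reduceSucc,
    h00, h01, h02, h03, h10, h11, h12, h13, single, colCat, rowCat, Option.bind_some, dite_eq_ite,
    ↓reduceIte, ↓reduceDIte, Nat.reduceAdd, Order.lt_one_iff, Order.lt_two_iff,
    Fin.val_eq_zero_iff, Fin.mk_eq_zero, Fin.val_cast, Fin.cast_eq_self, ite_self,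
    Matrix.cons_val', Matrix.cons_val_fin_one, Option.some.injEq, mk.injEq, heq_eq_eq, true_and]
  funext i j
  fin_cases i <;> fin_cases j <;> rfl

theorem get?_zero_one_eq_of_mem_alpha16 {U : Arr σ} (hU : U ∈ langOf σ Mode.rc alpha16)
    (hr : U.rows = 2) (hc : U.cols = 2) : U.get? 0 1 = U.get? 1 0 := by
  obtain ⟨f, rfl⟩ := exists_eq_map_of_mem_langOf_rc hU hr hc
  rfl

variable {M : Set (Arr σ)}

theorem dims_le_of_mem_colCatLang (hM : M ⊆ langOf σ Mode.rc alpha16) {W : Arr σ}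
    (hW : W ∈ colCatLang M M) : 2 ≤ W.rows ∧ 4 ≤ W.cols := by
  obtain ⟨U, hU, V, hV, h⟩ := hW
  have := colCat_dims h
  have := dims_le_of_mem_langOf_rc (hM hU)
  have := dims_le_of_mem_langOf_rc (hM hV)
  dsimp only [alpha16] at *
  omega

theorem notMem_colCatLang {a b : σ} (hab : a ≠ b) (hM : M ⊆ langOf σ Mode.rc alpha16) :
    ⟨2, 5, two_pos, by norm_num, ![![a, a, b, a, a], ![b, a, a, b, b]]⟩ ∉ colCatLang M M := by
  rintro ⟨U, hU, V, hV, h⟩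
  obtain ⟨hUV, hUr, hcols⟩ := colCat_dims h
  have hUd := dims_le_of_mem_langOf_rc (hM hU)
  have hVd := dims_le_of_mem_langOf_rc (hM hV)
  dsimp only [alpha16] at hUr hcols hUd hVd
  have hget := get?_of_colCat h
  obtain hU2 | hU3 : U.cols = 2 ∨ U.cols = 3 := by omega
  · have := get?_zero_one_eq_of_mem_alpha16 (hM hU) (by omega) hU2
    have h01 := hget 0 1
    have h10 := hget 1 0
    simp only [hU2, Nat.one_lt_ofNat, Nat.ofNat_pos, if_true] at h01 h10
    exact hab (Option.some.inj (h01.trans (this.trans h10.symm)))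
  · have := get?_zero_one_eq_of_mem_alpha16 (hM hV) (by omega) (by omega)
    have h04 := hget 0 4
    have h13 := hget 1 3
    simp only [hU3] at h04 h13
    exact hab (Option.some.inj (h04.trans (this.trans h13.symm)))

theorem colCatLang_ne {a b : σ} (hab : a ≠ b) {L : Set (Arr σ)} {γ : Arr ℕ}
    (hαM : langOf σ Mode.r alpha16 ⊆ M) (hM : M ⊆ langOf σ Mode.rc alpha16)
    (hγL : langOf σ Mode.r γ ⊆ L) (hL : L ⊆ langOf σ Mode.rc γ) : colCatLang M M ≠ L := by
  classical
  intro hK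
  have hmem : ∀ f g : ℕ → σ,
      (⟨2, 4, two_pos, four_pos, ![![f 0, f 1, g 0, g 1], ![f 1, f 2, g 1, g 2]]⟩ : Arr σ) ∈ L :=
    fun f g => hK ▸ ⟨_, hαM (map_mem_langOf_r _ f), _, hαM (map_mem_langOf_r _ g),
      colCat_map_alpha16 f g⟩
  have hdims : γ.rows = 2 ∧ γ.cols = 4 := by
    have := dims_le_of_mem_colCatLang hM (hK ▸ hγL (map_mem_langOf_r γ fun _ => a))
    have := dims_le_of_mem_langOf_rc (hL (hmem (fun _ => a) (fun _ => a)))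
    dsimp only [map] at *
    omega
  cases γ with | mk r c _ _ e
  obtain ⟨rfl, rfl⟩ := hdims
  have hsep : ∀ f g : ℕ → σ, ∃ h : ℕ → σ,
      ∀ i j, ![![f 0, f 1, g 0, g 1], ![f 1, f 2, g 1, g 2]] i j = h (e i j) := by
    intro f g
    obtain ⟨h, hh⟩ := exists_eq_map_of_mem_langOf_rc (hL (hmem f g)) rfl rfl
    simp only [map, Arr.mk.injEq, heq_eq_eq, true_and] at hh
    exact ⟨h, fun i j => congrFun (congrFun hh i) j⟩
  obtain ⟨h₁, hh₁⟩ := hsep (fun x => if x = 0 then a else b) fun _ => b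
  obtain ⟨h₂, hh₂⟩ := hsep (fun _ => b) fun x => if x = 2 then a else b
  obtain ⟨h₃, hh₃⟩ := hsep (fun x => if x = 1 then a else b) fun _ => b
  -- On the variables of `γ`, `h₁`, `h₂`, `h₃` take the value `a` exactly at the entries (0,0),
  -- (1,3) and (0,1)/(1,0) respectively.
  let s : ℕ → Arr σ := fun x =>
    if h₁ x = a then ⟨1, 2, one_pos, two_pos, ![![a, a]]⟩
    else if h₂ x = a then ⟨1, 2, one_pos, two_pos, ![![b, b]]⟩
    else if h₃ x = a then single b else single a
  refine notMem_colCatLang hab hM (hK ▸ hγL ⟨s, subCR_two_by_four ?_ ?_ ?_ ?_ ?_ ?_ ?_ ?_⟩) <;>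
    simp [s, ← hh₁, ← hh₂, ← hh₃, hab.symm]

end NonClosure

section Transposition

theorem transpose_alpha16 : alpha16.transpose = alpha16 := by
  unfold transpose alpha16
  congr
  funext i j
  exact Nat.add_comm _ _

variable {σ : Type}

theorem colCatLang_langOf_r_of_rowCatLang_langOf_c {α β γ : Arr ℕ}
    (h : rowCatLang (langOf σ Mode.c α) (langOf σ Mode.c β) = langOf σ Mode.c γ) :
    colCatLang (langOf σ Mode.r α.transpose) (langOf σ Mode.r β.transpose) =
      langOf σ Mode.r γ.transpose := by
  rw [langOf_c_eq_preimage, langOf_c_eq_preimage, langOf_c_eq_preimage,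
    rowCatLang_preimage_transpose] at h
  exact Set.preimage_injective.2 transpose_involutive.surjective h

theorem colCatLang_langOf_rc_of_rowCatLang_langOf_rc {α β γ : Arr ℕ}
    (h : rowCatLang (langOf σ Mode.rc α) (langOf σ Mode.rc β) = langOf σ Mode.rc γ) :
    colCatLang (langOf σ Mode.rc α.transpose) (langOf σ Mode.rc β.transpose) =
      langOf σ Mode.rc γ.transpose := by
  rw [langOf_rc_eq_preimage α, langOf_rc_eq_preimage β, langOf_rc_eq_preimage γ,
    rowCatLang_preimage_transpose] at h
  exact Set.preimage_injective.2 transpose_involutive.surjective h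

end Transposition

/-- over a non-unary alphabet, `𝓛_{Σ,r}` is not closed under
column concatenation (witnessed by `α = [x₁ x₂; x₂ x₃]`), `𝓛_{Σ,c}` is not
closed under row concatenation, and `𝓛_{Σ,rc}` is closed under neither. -/
theorem stmt16 {σ : Type} [Fintype σ] (hcard : 2 ≤ Fintype.card σ) :
    (∀ γ : Arr ℕ,
      colCatLang (langOf σ Mode.r alpha16) (langOf σ Mode.r alpha16) ≠
        langOf σ Mode.r γ) ∧
    (∃ α β : Arr ℕ, ∀ γ : Arr ℕ,
      rowCatLang (langOf σ Mode.c α) (langOf σ Mode.c β) ≠ langOf σ Mode.c γ) ∧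
    (∃ α β : Arr ℕ, ∀ γ : Arr ℕ,
      rowCatLang (langOf σ Mode.rc α) (langOf σ Mode.rc β) ≠ langOf σ Mode.rc γ) ∧
    (∃ α β : Arr ℕ, ∀ γ : Arr ℕ,
      colCatLang (langOf σ Mode.rc α) (langOf σ Mode.rc β) ≠ langOf σ Mode.rc γ) := by
  obtain ⟨a, b, hab⟩ := Fintype.exists_pair_of_one_lt_card (α := σ) hcard
  have hr : ∀ γ : Arr ℕ,
      colCatLang (langOf σ Mode.r alpha16) (langOf σ Mode.r alpha16) ≠ langOf σ Mode.r γ :=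
    fun _ => colCatLang_ne hab subset_rfl Set.subset_union_left subset_rfl Set.subset_union_left
  have hrc : ∀ γ : Arr ℕ,
      colCatLang (langOf σ Mode.rc alpha16) (langOf σ Mode.rc alpha16) ≠ langOf σ Mode.rc γ :=
    fun _ => colCatLang_ne hab Set.subset_union_left subset_rfl Set.subset_union_left subset_rfl
  refine ⟨hr, ⟨alpha16, alpha16, fun γ h => hr γ.transpose ?_⟩,
    ⟨alpha16, alpha16, fun γ h => hrc γ.transpose ?_⟩, ⟨alpha16, alpha16, hrc⟩⟩
  · simpa only [transpose_alpha16] using colCatLang_langOf_r_of_rowCatLang_langOf_c h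
  · simpa only [transpose_alpha16] using colCatLang_langOf_rc_of_rowCatLang_langOf_rc h
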